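/- Among all valid formats (m_1,…,m_r) for n players, with p < 1/2, the product ∏_{j=1}^r ((2m_j/r_j)p + 1 − 2m_j/r_j) is maximized by the format with one match each round, with value ∏_{j=1}^{n−1} ((2/(n−j+1))p + 1 − 2/(n−j+1)). -/

import Mathlib

/-!
Write `q = 2(1 - p) ∈ [1, 2]`, so that a round of `m` matches among `s` remaining players
contributes the factor `1 - q m / s`. The one-step estimate
`(1 - q a / s) (1 - q / (s - a)) - (1 - q (a + 1) / s) = q a (q - 1) / (s (s - a)) ≥ 0`
shows that replacing a round of `a` matches by `a` rounds of a single match never decreases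
the product. Applying this to each round of a format in turn, from the first one, turns any
format into the one-match-per-round format.
-/

/-- `ValidFormat n r m` : `m 0, …, m (r-1)` are the numbers of matches per round of a
knockout tournament format for `n` players. -/
def ValidFormat (n r : ℕ) (m : ℕ → ℕ) : Prop :=
  (∀ j < r, 0 < m j ∧ 2 * m j ≤ n - ∑ l ∈ Finset.range j, m l) ∧
  ∑ j ∈ Finset.range r, m j = n - 1

/-- The product `∏_j (2 m_j / r_j · p + 1 − 2 m_j / r_j)` associated with a format. -/
noncomputable def formatProd (n r : ℕ) (m : ℕ → ℕ) (p : ℝ) : ℝ :=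
  ∏ j ∈ Finset.range r,
    ((2 * m j / ((n : ℝ) - ∑ l ∈ Finset.range j, (m l : ℝ))) * p
      + 1 - 2 * m j / ((n : ℝ) - ∑ l ∈ Finset.range j, (m l : ℝ)))

open Finset

noncomputable def lossProd (q s : ℝ) (r : ℕ) (m : ℕ → ℕ) : ℝ :=
  ∏ j ∈ range r, (1 - q * m j / (s - ∑ l ∈ range j, (m l : ℝ)))

lemma formatProd_eq_lossProd (n r : ℕ) (m : ℕ → ℕ) (p : ℝ) :
    formatProd n r m p = lossProd (2 * (1 - p)) n r m :=
  prod_congr rfl fun _ _ => by ring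

lemma lossProd_add (q s : ℝ) (a b : ℕ) (m : ℕ → ℕ) :
    lossProd q s (a + b) m =
      lossProd q s a m * lossProd q (s - ∑ l ∈ range a, (m l : ℝ)) b (fun j => m (a + j)) := by
  unfold lossProd
  rw [prod_range_add]
  congr 1
  refine prod_congr rfl fun j _ => ?_
  rw [sum_range_add, sub_sub]

lemma lossProd_one (q s : ℝ) (m : ℕ → ℕ) : lossProd q s 1 m = 1 - q * m 0 / s := by
  simp [lossProd]

lemma lossProd_ones (q s : ℝ) (k : ℕ) :
    lossProd q s k (fun _ => 1) = ∏ j ∈ range k, (1 - q / (s - j)) := by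
  simp [lossProd]

lemma lossProd_ones_nonneg {q s : ℝ} (hq : q ≤ 2) {k : ℕ} (hk : (k : ℝ) + 1 ≤ s) :
    0 ≤ lossProd q s k (fun _ => 1) := by
  rw [lossProd_ones]
  refine prod_nonneg fun j hj => ?_
  have hj : (j : ℝ) + 1 ≤ k := by exact_mod_cast mem_range.mp hj
  rw [sub_nonneg, div_le_one (by linarith)]
  linarith

lemma one_sub_mul_div_le_lossProd_ones {q s : ℝ} (hq1 : 1 ≤ q) (hq2 : q ≤ 2) {a : ℕ}
    (hs : (a : ℝ) + 1 ≤ s) : 1 - q * a / s ≤ lossProd q s a (fun _ => 1) := by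
  induction a with
  | zero => simp [lossProd]
  | succ a ih =>
    push_cast at hs
    have hsa : 2 ≤ s - a := by linarith
    have hs_pos : 0 < s := by linarith [(Nat.cast_nonneg a : (0 : ℝ) ≤ a)]
    have hfactor : 0 ≤ 1 - q / (s - a) := by
      rw [sub_nonneg, div_le_one (by linarith)]
      linarith
    have hdefect : (1 - q * a / s) * (1 - q / (s - a)) - (1 - q * ((a + 1 : ℕ) : ℝ) / s) =
        q * a * (q - 1) / (s * (s - a)) := by
      push_cast
      field_simp [hs_pos.ne', (by linarith : s - a ≠ 0)]
      ring
    have hdefect_nonneg : 0 ≤ q * a * (q - 1) / (s * (s - a)) := by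
      apply div_nonneg
      · exact mul_nonneg (mul_nonneg (by linarith) a.cast_nonneg) (by linarith)
      · exact mul_nonneg hs_pos.le (by linarith)
    rw [lossProd_ones, prod_range_succ, ← lossProd_ones]
    calc 1 - q * ((a + 1 : ℕ) : ℝ) / s ≤ (1 - q * a / s) * (1 - q / (s - a)) := by linarith
      _ ≤ lossProd q s a (fun _ => 1) * (1 - q / (s - a)) :=
        mul_le_mul_of_nonneg_right (ih (by linarith)) hfactor

lemma ValidFormat.tail {n r : ℕ} {m : ℕ → ℕ} (h : ValidFormat n (r + 1) m) :
    ValidFormat (n - m 0) r (fun j => m (j + 1)) := by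
  obtain ⟨hround, hsum⟩ := h
  dsimp only [ValidFormat]
  refine ⟨fun j hj => ⟨(hround (j + 1) (by omega)).1, ?_⟩, ?_⟩
  · have := (hround (j + 1) (by omega)).2
    rw [sum_range_succ'] at this
    omega
  · rw [sum_range_succ'] at hsum
    omega

lemma lossProd_le_lossProd_ones {q : ℝ} (hq1 : 1 ≤ q) (hq2 : q ≤ 2) {n r : ℕ} {m : ℕ → ℕ}
    (h : ValidFormat n r m) : lossProd q n r m ≤ lossProd q n (n - 1) (fun _ => 1) := by
  induction r generalizing n m with
  | zero =>
    have : n - 1 = 0 := by simpa using h.2.symm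
    simp [this, lossProd]
  | succ r ih =>
    obtain ⟨hpos, hhalf⟩ := h.1 0 (Nat.succ_pos r)
    simp only [range_zero, sum_empty, tsub_zero] at hhalf
    have hn : ((n - m 0 : ℕ) : ℝ) = n - m 0 := Nat.cast_sub (by omega)
    have hhalf' : 2 * (m 0 : ℝ) ≤ n := by exact_mod_cast hhalf
    have hpos' : (1 : ℝ) ≤ m 0 := by exact_mod_cast hpos
    have htail := ih h.tail
    rw [hn] at htail
    have hfirst : 0 ≤ 1 - q * m 0 / n := by
      rw [sub_nonneg, div_le_one (by linarith)]
      nlinarith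
    have hsplit : n - 1 = m 0 + (n - m 0 - 1) := by omega
    calc lossProd q n (r + 1) m
        = (1 - q * m 0 / n) * lossProd q (n - m 0) r (fun j => m (j + 1)) := by
          rw [add_comm, lossProd_add, lossProd_one]
          simp [add_comm]
      _ ≤ (1 - q * m 0 / n) * lossProd q (n - m 0) (n - m 0 - 1) (fun _ => 1) :=
          mul_le_mul_of_nonneg_left htail hfirst
      _ ≤ lossProd q n (m 0) (fun _ => 1) * lossProd q (n - m 0) (n - m 0 - 1) (fun _ => 1) := by
          refine mul_le_mul_of_nonneg_right
            (one_sub_mul_div_le_lossProd_ones hq1 hq2 (by linarith)) (lossProd_ones_nonneg hq2 ?_)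
          rw [← hn]
          exact_mod_cast (by omega : n - m 0 - 1 + 1 ≤ n - m 0)
      _ = lossProd q n (n - 1) (fun _ => 1) := by
          rw [hsplit, lossProd_add]
          simp

theorem stmt_12_general (n : ℕ) (p : ℝ) (hp : p ∈ Set.Ioo (0 : ℝ) (1/2)) :
    (∀ r : ℕ, ∀ m : ℕ → ℕ, ValidFormat n r m →
        formatProd n r m p ≤
          ∏ j ∈ Finset.range (n - 1), ((2/((n:ℝ) - j)) * p + 1 - 2/((n:ℝ) - j))) ∧
    formatProd n (n - 1) (fun _ => 1) p =
      ∏ j ∈ Finset.range (n - 1), ((2/((n:ℝ) - j)) * p + 1 - 2/((n:ℝ) - j)) := by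
  obtain ⟨hp0, hp2⟩ := hp
  have hsingle : lossProd (2 * (1 - p)) n (n - 1) (fun _ => 1) =
      ∏ j ∈ range (n - 1), ((2 / ((n : ℝ) - j)) * p + 1 - 2 / ((n : ℝ) - j)) := by
    rw [lossProd_ones]
    exact prod_congr rfl fun _ _ => by ring
  refine ⟨fun r m h => ?_, ?_⟩
  · rw [formatProd_eq_lossProd, ← hsingle]
    exact lossProd_le_lossProd_ones (by linarith) (by linarith) h
  · rw [formatProd_eq_lossProd, hsingle]

theorem stmt_12 (n : ℕ) (hn : 2 ≤ n) (p : ℝ) (hp : p ∈ Set.Ioo (0 : ℝ) (1/2)) :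
    (∀ r : ℕ, ∀ m : ℕ → ℕ, ValidFormat n r m →
        formatProd n r m p ≤
          ∏ j ∈ Finset.range (n - 1), ((2/((n:ℝ) - j)) * p + 1 - 2/((n:ℝ) - j))) ∧
    formatProd n (n - 1) (fun _ => 1) p =
      ∏ j ∈ Finset.range (n - 1), ((2/((n:ℝ) - j)) * p + 1 - 2/((n:ℝ) - j)) :=
  stmt_12_general n p hp
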